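/- For matrices C, Z ∈ ℝ^{m×n}, ‖C ∘ Z‖ ≤ min(max_i ‖C_{i,:}‖, max_j ‖C_{:,j}‖) · ‖Z‖, where C_{i,:} and C_{:,j} denote the i-th row and j-th column of C, ‖·‖ on matrices is the spectral norm and on vectors the Euclidean norm. -/
import Mathlib
open Matrix

/-- Spectral (operator) norm of a real matrix, w.r.t. Euclidean norms. -/
noncomputable def specNorm {m n : ℕ} (A : Matrix (Fin m) (Fin n) ℝ) : ℝ :=
  ‖LinearMap.toContinuousLinearMap (Matrix.toEuclideanLin A)‖

/-- Euclidean norm of a vector. -/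
noncomputable def vecNorm {m : ℕ} (b : Fin m → ℝ) : ℝ := Real.sqrt (∑ i, b i ^ 2)

lemma specNorm_nonneg {m n : ℕ} (A : Matrix (Fin m) (Fin n) ℝ) : 0 ≤ specNorm A :=
  norm_nonneg _

lemma specNorm_transpose {m n : ℕ} (A : Matrix (Fin m) (Fin n) ℝ) :
    specNorm Aᵀ = specNorm A := by
  have h : Aᵀ = Aᴴ := by
    ext i j; simp [Matrix.conjTranspose_apply]
  rw [specNorm, h, Matrix.toEuclideanLin_conjTranspose_eq_adjoint,
    LinearMap.adjoint_toContinuousLinearMap]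
  exact (ContinuousLinearMap.adjoint).norm_map _

/-- Column sum of squares is bounded by the spectral norm squared. -/
lemma col_sq_le {m n : ℕ} (Z : Matrix (Fin m) (Fin n) ℝ) (j : Fin n) :
    ∑ i, Z i j ^ 2 ≤ specNorm Z ^ 2 := by
  set T := LinearMap.toContinuousLinearMap (Matrix.toEuclideanLin Z)
  have he : ‖T (EuclideanSpace.single j (1 : ℝ))‖ ≤ specNorm Z := by
    have := T.le_opNorm (EuclideanSpace.single j (1 : ℝ))
    simpa [specNorm, EuclideanSpace.norm_single] using this
  have happ : ∀ i, T (EuclideanSpace.single j (1 : ℝ)) i = Z i j := by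
    intro i
    show (Matrix.toEuclideanLin Z) (EuclideanSpace.single j (1 : ℝ)) i = Z i j
    rw [Matrix.toEuclideanLin_apply]
    show (Z *ᵥ fun k => (EuclideanSpace.single j (1:ℝ)) k) i = Z i j
    simp [Matrix.mulVec, dotProduct, EuclideanSpace.single_apply, mul_ite]
  have hnorm : ‖T (EuclideanSpace.single j (1 : ℝ))‖ ^ 2 = ∑ i, Z i j ^ 2 := by
    rw [EuclideanSpace.norm_eq, Real.sq_sqrt (by positivity)]
    simp [happ, sq_abs]
  calc ∑ i, Z i j ^ 2 = ‖T (EuclideanSpace.single j (1 : ℝ))‖ ^ 2 := hnorm.symm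
    _ ≤ specNorm Z ^ 2 := pow_le_pow_left₀ (norm_nonneg _) he 2

lemma row_bound {m n : ℕ} (C Z : Matrix (Fin m) (Fin n) ℝ) :
    specNorm (Matrix.hadamard C Z)
      ≤ (⨆ i, vecNorm (fun j => C i j)) * specNorm Z := by
  set r := ⨆ i, vecNorm (fun j => C i j) with hr
  have hr0 : 0 ≤ r := Real.iSup_nonneg fun i => Real.sqrt_nonneg _
  have hZ0 : 0 ≤ specNorm Z := specNorm_nonneg Z
  refine ContinuousLinearMap.opNorm_le_bound _ (mul_nonneg hr0 hZ0) fun x => ?_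
  have hrow : ∀ i : Fin m, ∑ j, C i j ^ 2 ≤ r ^ 2 := by
    intro i
    have h1 : vecNorm (fun j => C i j) ≤ r := by
      exact le_ciSup (Set.Finite.bddAbove (Set.finite_range (fun i => vecNorm fun j => C i j))) i
    calc ∑ j, C i j ^ 2 = vecNorm (fun j => C i j) ^ 2 := by
          rw [vecNorm, Real.sq_sqrt (by positivity)]
      _ ≤ r ^ 2 := pow_le_pow_left₀ (Real.sqrt_nonneg _) h1 2
  set T := LinearMap.toContinuousLinearMap (Matrix.toEuclideanLin (Matrix.hadamard C Z))
  have happ : ∀ i, T x i = ∑ j, C i j * Z i j * x j := by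
    intro i
    show (Matrix.toEuclideanLin (Matrix.hadamard C Z)) x i = _
    rw [Matrix.toEuclideanLin_apply]
    show ((Matrix.hadamard C Z) *ᵥ fun k => x k) i = _
    simp [Matrix.mulVec, dotProduct, Matrix.hadamard]
  have hx2 : ‖x‖ ^ 2 = ∑ j, x j ^ 2 := by
    rw [EuclideanSpace.norm_eq, Real.sq_sqrt (by positivity)]
    simp [sq_abs]
  have key : ‖T x‖ ^ 2 ≤ (r * specNorm Z * ‖x‖) ^ 2 := by
    have hTx : ‖T x‖ ^ 2 = ∑ i, (∑ j, C i j * Z i j * x j) ^ 2 := by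
      rw [EuclideanSpace.norm_eq, Real.sq_sqrt (by positivity)]
      simp [happ, sq_abs]
    rw [hTx]
    have step1 : ∀ i : Fin m,
        (∑ j, C i j * Z i j * x j) ^ 2 ≤ r ^ 2 * ∑ j, (Z i j * x j) ^ 2 := by
      intro i
      have hcs := Finset.sum_mul_sq_le_sq_mul_sq Finset.univ
        (fun j => C i j) (fun j => Z i j * x j)
      have : (∑ j, C i j * (Z i j * x j)) ^ 2
          ≤ (∑ j, C i j ^ 2) * ∑ j, (Z i j * x j) ^ 2 := hcs
      calc (∑ j, C i j * Z i j * x j) ^ 2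
          = (∑ j, C i j * (Z i j * x j)) ^ 2 := by ring_nf
        _ ≤ (∑ j, C i j ^ 2) * ∑ j, (Z i j * x j) ^ 2 := this
        _ ≤ r ^ 2 * ∑ j, (Z i j * x j) ^ 2 := by
            apply mul_le_mul_of_nonneg_right (hrow i) (by positivity)
    calc ∑ i, (∑ j, C i j * Z i j * x j) ^ 2
        ≤ ∑ i, r ^ 2 * ∑ j, (Z i j * x j) ^ 2 :=
          Finset.sum_le_sum fun i _ => step1 i
      _ = r ^ 2 * ∑ j, (∑ i, Z i j ^ 2) * x j ^ 2 := by
          rw [← Finset.mul_sum, Finset.sum_comm]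
          congr 1
          refine Finset.sum_congr rfl fun j _ => ?_
          rw [Finset.sum_mul]
          exact Finset.sum_congr rfl fun i _ => by ring
      _ ≤ r ^ 2 * ∑ j, specNorm Z ^ 2 * x j ^ 2 := by
          apply mul_le_mul_of_nonneg_left _ (by positivity)
          refine Finset.sum_le_sum fun j _ => ?_
          exact mul_le_mul_of_nonneg_right (col_sq_le Z j) (by positivity)
      _ = (r * specNorm Z * ‖x‖) ^ 2 := by
          rw [← Finset.mul_sum, ← hx2]; ring
  have h1 : 0 ≤ r * specNorm Z * ‖x‖ := by positivity
  calc ‖T x‖ = Real.sqrt (‖T x‖ ^ 2) := (Real.sqrt_sq (norm_nonneg _)).symm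
    _ ≤ Real.sqrt ((r * specNorm Z * ‖x‖) ^ 2) := Real.sqrt_le_sqrt key
    _ = r * specNorm Z * ‖x‖ := Real.sqrt_sq h1

theorem hadamard_spec_row_col_bound {m n : ℕ} (C Z : Matrix (Fin m) (Fin n) ℝ) :
    specNorm (Matrix.hadamard C Z)
      ≤ min (⨆ i, vecNorm (fun j => C i j)) (⨆ j, vecNorm (fun i => C i j)) * specNorm Z := by
  rcases min_cases (⨆ i, vecNorm (fun j => C i j)) (⨆ j, vecNorm (fun i => C i j)) with
    ⟨h, _⟩ | ⟨h, _⟩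
  · rw [h]; exact row_bound C Z
  · rw [h]
    have := row_bound Cᵀ Zᵀ
    rw [show Matrix.hadamard Cᵀ Zᵀ = (Matrix.hadamard C Z)ᵀ from rfl, specNorm_transpose,
      specNorm_transpose] at this
    simpa [Matrix.transpose_apply] using this
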